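/- If π is a crossing partition of {1,…,k}, then there exists no π-consistent graph with exactly k−#π+1 connected components; that is, I*(π) = ∅. -/

import Mathlib

open Finset

section Defs

open scoped Classical

variable {k : ℕ}

/-- Two elements lie in the same block of the partition. -/
def InSameBlock (P : Finpartition (Finset.univ : Finset (Fin k))) (x y : Fin k) : Prop :=
  ∃ B ∈ P.parts, x ∈ B ∧ y ∈ B

/-- A partition of `{1,…,k}` is crossing if there are `a < b < c < d` with `a ∼ c`, `b ∼ d`
but `a` and `c` not in the same block as `b` and `d`. -/
def IsCrossing (P : Finpartition (Finset.univ : Finset (Fin k))) : Prop :=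
  ∃ a b c d : Fin k, a < b ∧ b < c ∧ c < d ∧
    InSameBlock P a c ∧ InSameBlock P b d ∧ ¬ InSameBlock P a b

/-- The closed block `B̄ = B ∪ {l : l - 1 ∈ B}` (indices cyclic). -/
def closedBlock [NeZero k] (B : Finset (Fin k)) : Finset (Fin k) :=
  B ∪ B.image (· + 1)

/-- The multiplicity `m_π(l)`: `2` if `l ∼_π l-1`, and `1` otherwise. -/
noncomputable def multPi [NeZero k] (P : Finpartition (Finset.univ : Finset (Fin k)))
    (l : Fin k) : ℕ :=
  if InSameBlock P l (l - 1) then 2 else 1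

/-- Number of endpoints of the edge `e` equal to `v`, counted with multiplicity
(a loop at `v` counts twice). -/
def endCount (v : Fin k) (e : Sym2 (Fin k)) : ℕ :=
  Sym2.lift ⟨fun a b => (if a = v then 1 else 0) + (if b = v then 1 else 0),
    fun _ _ => add_comm _ _⟩ e

/-- Degree of the vertex `v` in the multiset of edges `M`. -/
def degIn (v : Fin k) (M : Multiset (Sym2 (Fin k))) : ℕ :=
  (M.map (endCount v)).sum

/-- The simple graph underlying the multigraph with edge multiset `M`. -/
def graphOf (M : Multiset (Sym2 (Fin k))) : SimpleGraph (Fin k) where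
  Adj v w := v ≠ w ∧ s(v, w) ∈ M
  symm := by
    constructor
    intro v w h
    exact ⟨Ne.symm h.1, by rw [Sym2.eq_swap]; exact h.2⟩
  loopless := ⟨fun v h => h.1 rfl⟩

/-- Number of connected components of the multigraph with edge multiset `M`
(isolated vertices and vertices carrying only loops count as components). -/
noncomputable def numComponents (M : Multiset (Sym2 (Fin k))) : ℕ :=
  Nat.card (graphOf M).ConnectedComponent

/-- `M` together with the decomposition `F` is a `π`-consistent multigraph:
`M` has `k` edges; `M` is the disjoint union of the `F B`, `B` a block of `π`;
the ends of every edge of `F B` lie in the closed block `B̄`; and in the submultigraph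
`(B̄, F B)` every vertex `l ∈ B̄` has degree `m_π(l)`. -/
def IsConsistentDecomp [NeZero k] (P : Finpartition (Finset.univ : Finset (Fin k)))
    (M : Multiset (Sym2 (Fin k))) (F : Finset (Fin k) → Multiset (Sym2 (Fin k))) : Prop :=
  Multiset.card M = k ∧
  M = ∑ B ∈ P.parts, F B ∧
  (∀ B ∈ P.parts, ∀ e ∈ F B, ∀ v ∈ e, v ∈ closedBlock B) ∧
  (∀ B ∈ P.parts, ∀ v ∈ closedBlock B, degIn v (F B) = multPi P v)

/-- A `π`-consistent multigraph. -/
def Consistent [NeZero k] (P : Finpartition (Finset.univ : Finset (Fin k)))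
    (M : Multiset (Sym2 (Fin k))) : Prop :=
  ∃ F, IsConsistentDecomp P M F

end Defs

/-!
Let `H` be the bipartite graph on the connected components of `M` and the blocks of `π`, joining
a component `c` to a block `B` when some edge of `F B` lies in `c`. Both `l` and `l + 1` lie in
the closed block of the block of `l`, so consecutive blocks are joined through the component of
`l + 1` and `H` is connected. It has `(k - #π + 1) + #π = k + 1` vertices and at most
`∑ B, |F B| = k` edges, hence it is a tree and each `F B` has at most one edge in each component.

Now let `a < b < c < d` with `a, c ∈ A` and `b, d ∈ B ≠ A`, and cut the first edge `A — Z` of the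
path from `A` to `B` in `H`. Going once around `1, …, k`, the side of the cut containing the block
of `l` changes at least four times. A change between `l` and `l + 1` forces `l + 1` to be an end
of the unique edge of `F A` in `Z`, and that edge has only two ends.
-/

open SimpleGraph

section Multigraph

variable {k : ℕ}

@[simp] lemma endCount_mk (v a b : Fin k) :
    endCount v s(a, b) = (if a = v then 1 else 0) + (if b = v then 1 else 0) := rfl

lemma mem_of_endCount_ne_zero {v : Fin k} {e : Sym2 (Fin k)} (h : endCount v e ≠ 0) : v ∈ e := by
  induction e using Sym2.ind with
  | _ a b =>
    rw [Sym2.mem_iff]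
    by_contra! hv
    simp [Ne.symm hv.1, Ne.symm hv.2] at h

lemma exists_mem_of_degIn_ne_zero {v : Fin k} {N : Multiset (Sym2 (Fin k))}
    (h : degIn v N ≠ 0) : ∃ e ∈ N, v ∈ e := by
  obtain ⟨n, hn, hne⟩ : ∃ n ∈ N.map (endCount v), n ≠ 0 := by
    by_contra! h'
    exact h (Multiset.sum_eq_zero h')
  obtain ⟨e, he, rfl⟩ := Multiset.mem_map.1 hn
  exact ⟨e, he, mem_of_endCount_ne_zero hne⟩

lemma sum_endCount_mk (S : Finset (Fin k)) (a b : Fin k) :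
    ∑ v ∈ S, endCount v s(a, b) = (if a ∈ S then 1 else 0) + (if b ∈ S then 1 else 0) := by
  simp [Finset.sum_add_distrib]

lemma sum_degIn_filter_eq_two_mul_count {β : Type*} [DecidableEq β] (f : Fin k → β)
    (g : Sym2 (Fin k) → β) {N : Multiset (Sym2 (Fin k))} (hN : ∀ e ∈ N, ∀ v ∈ e, f v = g e)
    (c : β) : ∑ v with f v = c, degIn v N = 2 * (N.map g).count c := by
  induction N using Multiset.induction with
  | empty => simp [degIn]
  | cons e N ih =>
    have hdeg (v : Fin k) : degIn v (e ::ₘ N) = endCount v e + degIn v N := by simp [degIn]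
    simp only [hdeg, Finset.sum_add_distrib, Multiset.map_cons, Multiset.count_cons,
      ih fun e' he' => hN e' (Multiset.mem_cons_of_mem he')]
    induction e using Sym2.ind with
    | _ a b =>
      have ha := hN _ (Multiset.mem_cons_self _ _) a (Sym2.mem_mk_left a b)
      have hb := hN _ (Multiset.mem_cons_self _ _) b (Sym2.mem_mk_right a b)
      rw [sum_endCount_mk]
      obtain rfl | h := eq_or_ne c (g s(a, b))
      · simp [ha, hb]
        omega
      · simp [ha, hb, h, h.symm]

end Multigraph

section CyclicChanges

lemma Nat.exists_ne_succ_of_ne {β : Type*} (g : ℕ → β) {x y : ℕ} (hxy : x ≤ y)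
    (h : g x ≠ g y) : ∃ n, x ≤ n ∧ n < y ∧ g n ≠ g (n + 1) := by
  induction y, hxy using Nat.le_induction with
  | base => exact absurd rfl h
  | succ y hxy ih =>
    by_cases hy : g y = g (y + 1)
    · obtain ⟨n, hxn, hny, hn⟩ := ih (hy ▸ h)
      exact ⟨n, hxn, by omega, hn⟩
    · exact ⟨y, hxy, by omega, hy⟩

open Fin.NatCast

lemma Fin.natCast_injOn_Ico (k a : ℕ) [NeZero k] :
    Set.InjOn (Nat.cast : ℕ → Fin k) (Set.Ico a (a + k)) := by
  intro m hm n hn h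
  have hmod : m ≡ n [MOD k] := by simpa [Nat.ModEq, Fin.ext_iff] using h
  refine hmod.eq_of_abs_lt ?_
  simp only [Set.mem_Ico] at hm hn
  rw [abs_sub_lt_iff]
  omega

lemma four_le_card_filter_ne_add_one {k : ℕ} [NeZero k] {β : Type*} [DecidableEq β]
    (χ : Fin k → β) {a b c d : Fin k} (hab : a < b) (hbc : b < c) (hcd : c < d)
    (h₁ : χ a ≠ χ b) (h₂ : χ b ≠ χ c) (h₃ : χ c ≠ χ d) (h₄ : χ d ≠ χ a) :
    4 ≤ #{l | χ l ≠ χ (l + 1)} := by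
  set g : ℕ → β := fun n => χ (n : Fin k)
  have hg (l : Fin k) : g l = χ l := by simp [g]
  have hgk : g (a + k) = χ a := by simp [g]
  rw [Fin.lt_def] at hab hbc hcd
  obtain ⟨n₁, ha₁, hn₁, h₁⟩ := Nat.exists_ne_succ_of_ne g hab.le (by rwa [hg, hg])
  obtain ⟨n₂, hb₂, hn₂, h₂⟩ := Nat.exists_ne_succ_of_ne g hbc.le (by rwa [hg, hg])
  obtain ⟨n₃, hc₃, hn₃, h₃⟩ := Nat.exists_ne_succ_of_ne g hcd.le (by rwa [hg, hg])
  obtain ⟨n₄, hd₄, hn₄, h₄⟩ := Nat.exists_ne_succ_of_ne g (by omega : (d : ℕ) ≤ a + k)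
    (by rwa [hg, hgk])
  calc 4 = #{n₁, n₂, n₃, n₄} := by
        rw [card_insert_of_notMem, card_insert_of_notMem, card_insert_of_notMem,
          card_singleton] <;> simp <;> omega
    _ ≤ #{l | χ l ≠ χ (l + 1)} := by
      refine card_le_card_of_injOn (fun n => (n : Fin k)) ?_
        ((Fin.natCast_injOn_Ico k a).mono ?_)
      · intro n hn
        simp only [coe_insert, coe_singleton, Set.mem_insert_iff, Set.mem_singleton_iff] at hn
        simp only [coe_filter, mem_univ, true_and, Set.mem_ofPred_eq, ← Nat.cast_succ]
        rcases hn with rfl | rfl | rfl | rfl <;> assumption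
      · intro n hn
        simp only [coe_insert, coe_singleton, Set.mem_insert_iff, Set.mem_singleton_iff] at hn
        simp only [Set.mem_Ico]
        omega

end CyclicChanges

namespace SimpleGraph

variable {V α β : Type*}

def bipartiteOfRel (r : α → β → Prop) : SimpleGraph (α ⊕ β) where
  Adj
    | .inl a, .inr b => r a b
    | .inr b, .inl a => r a b
    | _, _ => False
  symm := ⟨by rintro (a | b) (a | b) <;> simp⟩
  loopless := ⟨by rintro (a | b) <;> simp⟩

variable {r : α → β → Prop}

lemma not_bipartiteOfRel_adj_inr_inr {b b' : β} :
    ¬ (bipartiteOfRel r).Adj (.inr b) (.inr b') := id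

lemma card_edgeSet_bipartiteOfRel_le [Finite α] [Fintype β] :
    Nat.card (bipartiteOfRel r).edgeSet ≤ ∑ b, Nat.card {a // r a b} := by
  rw [← Nat.card_sigma]
  refine Nat.card_le_card_of_surjective
    (fun p => ⟨s(.inl p.2.1, .inr p.1), p.2.2⟩) ?_
  rintro ⟨e, he⟩
  induction e using Sym2.ind with
  | _ x y =>
    rcases x with a | b <;> rcases y with a' | b'
    · exact he.elim
    · exact ⟨⟨b', a, he⟩, rfl⟩
    · exact ⟨⟨b, a', he⟩, Subtype.ext Sym2.eq_swap⟩
    · exact he.elim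

/-- Meaningful only when the two ends of `e` lie in the same component. -/
noncomputable def edgeComponent (G : SimpleGraph V) (e : Sym2 V) : G.ConnectedComponent :=
  G.connectedComponentMk e.out.1

variable {G : SimpleGraph V} {u v w x y : V}

lemma reachable_deleteEdges_of_adj_of_adj {e : Sym2 V} (hx : G.Adj w x) (hy : G.Adj w y)
    (hxe : s(w, x) ≠ e) (hye : s(w, y) ≠ e) : (G.deleteEdges {e}).Reachable x y := by
  have hx' : (G.deleteEdges {e}).Adj w x := by simp [hx, hxe]
  have hy' : (G.deleteEdges {e}).Adj w y := by simp [hy, hye]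
  exact hx'.reachable.symm.trans hy'.reachable

/-- `w` is the second vertex of the path from `u` to `v`. -/
lemma IsAcyclic.exists_adj_not_reachable_deleteEdges (hG : G.IsAcyclic) (huv : G.Reachable u v)
    (hne : u ≠ v) : ∃ w, G.Adj u w ∧ ¬ (G.deleteEdges {s(u, w)}).Reachable u v := by
  classical
  obtain ⟨p, hp⟩ := huv.some.toPath
  cases p with
  | nil => exact absurd rfl hne
  | @cons _ w _ h q =>
    refine ⟨w, h, fun hr => isBridge_iff.1 (isAcyclic_iff_forall_adj_isBridge.1 hG h) ?_⟩
    have hq : ∀ e ∈ q.edges, e ∉ ({s(u, w)} : Set (Sym2 V)) := by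
      rintro e he rfl
      exact (Walk.cons_isPath_iff h q).1 hp |>.2 (q.fst_mem_support_of_mem_edges he)
    exact hr.trans (q.toDeleteEdges _ hq).reachable.symm

end SimpleGraph

section ComponentBlockGraph

variable {k : ℕ}

lemma graphOf_reachable_of_mem {M : Multiset (Sym2 (Fin k))} {e : Sym2 (Fin k)} (he : e ∈ M)
    {x y : Fin k} (hx : x ∈ e) (hy : y ∈ e) : (graphOf M).Reachable x y := by
  induction e using Sym2.ind with
  | _ a b =>
    have hab : (graphOf M).Reachable a b := by
      by_cases h : a = b
      · exact h ▸ .rfl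
      · exact Adj.reachable ⟨h, he⟩
    rw [Sym2.mem_iff] at hx hy
    rcases hx with rfl | rfl <;> rcases hy with rfl | rfl
    exacts [.rfl, hab, hab.symm, .rfl]

lemma connectedComponentMk_eq_edgeComponent {M : Multiset (Sym2 (Fin k))} {e : Sym2 (Fin k)}
    (he : e ∈ M) {x : Fin k} (hx : x ∈ e) :
    (graphOf M).connectedComponentMk x = (graphOf M).edgeComponent e :=
  ConnectedComponent.sound (graphOf_reachable_of_mem he hx e.out_fst_mem)

variable {P : Finpartition (univ : Finset (Fin k))} {M : Multiset (Sym2 (Fin k))}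
  {F : Finset (Fin k) → Multiset (Sym2 (Fin k))} {A : Finset (Fin k)}

def blockOf (P : Finpartition (univ : Finset (Fin k))) (l : Fin k) : P.parts :=
  ⟨P.part l, P.part_mem.2 (mem_univ l)⟩

lemma blockOf_eq {l : Fin k} (hA : A ∈ P.parts) (hl : l ∈ A) : blockOf P l = ⟨A, hA⟩ :=
  Subtype.ext (P.part_eq_of_mem hA hl)

variable [NeZero k]

lemma mem_closedBlock_of_mem {l : Fin k} (hl : l ∈ A) : l ∈ closedBlock A :=
  mem_union_left _ hl

lemma add_one_mem_closedBlock {l : Fin k} (hl : l ∈ A) : l + 1 ∈ closedBlock A :=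
  mem_union_right _ (mem_image_of_mem _ hl)

lemma multPi_pos (l : Fin k) : 0 < multPi P l := by
  unfold multPi
  split <;> omega

noncomputable def componentBlockGraph (P : Finpartition (univ : Finset (Fin k)))
    (M : Multiset (Sym2 (Fin k))) (F : Finset (Fin k) → Multiset (Sym2 (Fin k))) :
    SimpleGraph ((graphOf M).ConnectedComponent ⊕ P.parts) :=
  bipartiteOfRel fun c B => c ∈ (F B).map (graphOf M).edgeComponent

lemma IsConsistentDecomp.le (hF : IsConsistentDecomp P M F) (hA : A ∈ P.parts) : F A ≤ M :=
  hF.2.1 ▸ single_le_sum (fun _ _ => Multiset.zero_le _) hA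

lemma IsConsistentDecomp.componentBlockGraph_adj (hF : IsConsistentDecomp P M F)
    (hA : A ∈ P.parts) {v : Fin k} (hv : v ∈ closedBlock A) :
    (componentBlockGraph P M F).Adj
      (.inl ((graphOf M).connectedComponentMk v)) (.inr ⟨A, hA⟩) := by
  have hdeg : degIn v (F A) ≠ 0 := (hF.2.2.2 A hA v hv ▸ multPi_pos v).ne'
  obtain ⟨e, he, hve⟩ := exists_mem_of_degIn_ne_zero hdeg
  exact Multiset.mem_map.2
    ⟨e, he, (connectedComponentMk_eq_edgeComponent (Multiset.mem_of_le (hF.le hA) he) hve).symm⟩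

lemma IsConsistentDecomp.componentBlockGraph_adj_self (hF : IsConsistentDecomp P M F)
    (l : Fin k) : (componentBlockGraph P M F).Adj
      (.inl ((graphOf M).connectedComponentMk l)) (.inr (blockOf P l)) :=
  hF.componentBlockGraph_adj _ (mem_closedBlock_of_mem (P.mem_part (mem_univ l)))

lemma IsConsistentDecomp.componentBlockGraph_adj_add_one (hF : IsConsistentDecomp P M F)
    (l : Fin k) : (componentBlockGraph P M F).Adj
      (.inl ((graphOf M).connectedComponentMk (l + 1))) (.inr (blockOf P l)) :=
  hF.componentBlockGraph_adj _ (add_one_mem_closedBlock (P.mem_part (mem_univ l)))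

open Fin.NatCast in
lemma IsConsistentDecomp.componentBlockGraph_connected (hF : IsConsistentDecomp P M F) :
    (componentBlockGraph P M F).Connected := by
  set H := componentBlockGraph P M F
  have hblock (n : ℕ) : H.Reachable (.inr (blockOf P 0)) (.inr (blockOf P n)) := by
    induction n with
    | zero => simp
    | succ n ih =>
      rw [Nat.cast_succ]
      exact ih.trans ((hF.componentBlockGraph_adj_add_one n).reachable.symm.trans
        (hF.componentBlockGraph_adj_self _).reachable)
  refine (connected_iff_exists_forall_reachable H).2 ⟨.inr (blockOf P 0), ?_⟩
  rintro (c | ⟨A, hA⟩)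
  · induction c using ConnectedComponent.ind with
    | h v =>
      exact (Fin.cast_val_eq_self v ▸ hblock v).trans
        (hF.componentBlockGraph_adj_self v).reachable.symm
  · obtain ⟨l, hl⟩ := P.nonempty_of_mem_parts hA
    exact blockOf_eq hA hl ▸ Fin.cast_val_eq_self l ▸ hblock l

lemma IsConsistentDecomp.componentBlockGraph_isTree (hF : IsConsistentDecomp P M F)
    (hc : numComponents M = k - #P.parts + 1) :
    (componentBlockGraph P M F).IsTree ∧
      ∀ A ∈ P.parts, ((F A).map (graphOf M).edgeComponent).Nodup := by
  classical
  set H := componentBlockGraph P M F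
  set t : P.parts → ℕ := fun A => #((F A.1).map (graphOf M).edgeComponent).toFinset
  have ht_le (A : P.parts) : t A ≤ Multiset.card (F A) :=
    (Multiset.toFinset_card_le _).trans_eq (Multiset.card_map _ _)
  have hsum : ∑ A : P.parts, Multiset.card (F A) = k := by
    rw [sum_coe_sort P.parts (fun A => Multiset.card (F A)), ← Multiset.card_sum, ← hF.2.1,
      hF.1]
  have hV : Nat.card ((graphOf M).ConnectedComponent ⊕ P.parts) = k + 1 := by
    have := P.card_parts_le_card
    rw [card_univ, Fintype.card_fin] at this
    rw [Nat.card_sum, ← numComponents, hc, Nat.card_eq_fintype_card, Fintype.card_coe]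
    omega
  have hE : Nat.card H.edgeSet ≤ ∑ A, t A := by
    refine card_edgeSet_bipartiteOfRel_le.trans_eq (Finset.sum_congr rfl fun A _ => ?_)
    exact (Nat.card_congr (Equiv.subtypeEquivRight fun _ => Multiset.mem_toFinset.symm)).trans
      (Nat.card_eq_fintype_card.trans (Fintype.card_coe _))
  have hconn : H.Connected := hF.componentBlockGraph_connected
  have hle := hconn.card_vert_le_card_edgeSet_add_one
  have heq : ∑ A, t A = ∑ A : P.parts, Multiset.card (F A) := by
    have := sum_le_sum fun A (_ : A ∈ univ) => ht_le A
    omega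
  refine ⟨isTree_iff_connected_and_card.2 ⟨hconn, by omega⟩, fun A hA => ?_⟩
  rw [← Multiset.toFinset_card_eq_card_iff_nodup, Multiset.card_map]
  exact (sum_eq_sum_iff_of_le fun A _ => ht_le A).1 heq ⟨A, hA⟩ (mem_univ _)

open scoped Classical in
lemma IsConsistentDecomp.card_closedBlock_inter_component_le_two
    (hF : IsConsistentDecomp P M F) (hA : A ∈ P.parts)
    (hnd : ((F A).map (graphOf M).edgeComponent).Nodup) (Z : (graphOf M).ConnectedComponent) :
    #{m ∈ closedBlock A | (graphOf M).connectedComponentMk m = Z} ≤ 2 := by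
  calc #{m ∈ closedBlock A | (graphOf M).connectedComponentMk m = Z}
      ≤ ∑ m ∈ closedBlock A with (graphOf M).connectedComponentMk m = Z, degIn m (F A) := by
        rw [card_eq_sum_ones]
        refine sum_le_sum fun m hm => ?_
        rw [hF.2.2.2 A hA m (mem_filter.1 hm).1]
        exact multPi_pos m
    _ ≤ ∑ m with (graphOf M).connectedComponentMk m = Z, degIn m (F A) :=
        sum_le_sum_of_subset (filter_subset_filter _ (subset_univ _))
    _ = 2 * ((F A).map (graphOf M).edgeComponent).count Z :=
        sum_degIn_filter_eq_two_mul_count _ _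
          (fun e he _ hv => connectedComponentMk_eq_edgeComponent
            (Multiset.mem_of_le (hF.le hA) he) hv) Z
    _ ≤ 2 := by
        have := Multiset.nodup_iff_count_le_one.1 hnd Z
        omega

/-- The blocks of `l` and `l + 1` are both adjacent to the component of `l + 1`, so only the
deleted edge can separate them. -/
lemma IsConsistentDecomp.eq_and_mem_closedBlock_of_reachable_ne (hF : IsConsistentDecomp P M F)
    (hA : A ∈ P.parts) {Z : (graphOf M).ConnectedComponent} {u} {l : Fin k}
    (h : ((componentBlockGraph P M F).deleteEdges {s(.inr ⟨A, hA⟩, .inl Z)}).Reachable u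
        (.inr (blockOf P l)) ≠
      ((componentBlockGraph P M F).deleteEdges {s(.inr ⟨A, hA⟩, .inl Z)}).Reachable u
        (.inr (blockOf P (l + 1)))) :
    (graphOf M).connectedComponentMk (l + 1) = Z ∧ l + 1 ∈ closedBlock A := by
  by_contra hne
  have hedge {B : P.parts} (hB : blockOf P l = B ∨ blockOf P (l + 1) = B) :
      s(Sum.inl ((graphOf M).connectedComponentMk (l + 1)), Sum.inr B) ≠
        s(Sum.inr ⟨A, hA⟩, Sum.inl Z) := by
    rintro heq
    simp only [Sym2.eq_iff, reduceCtorEq, false_and, Sum.inl.injEq, Sum.inr.injEq,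
      false_or] at heq
    obtain ⟨rfl, rfl⟩ := heq
    refine hne ⟨rfl, ?_⟩
    rcases hB with hB | hB
    · rw [← show P.part l = A from congrArg Subtype.val hB]
      exact add_one_mem_closedBlock (P.mem_part (mem_univ l))
    · rw [← show P.part (l + 1) = A from congrArg Subtype.val hB]
      exact mem_closedBlock_of_mem (P.mem_part (mem_univ _))
  have hr := reachable_deleteEdges_of_adj_of_adj (hF.componentBlockGraph_adj_add_one l)
    (hF.componentBlockGraph_adj_self (l + 1)) (hedge (.inl rfl)) (hedge (.inr rfl))
  exact h (propext ⟨fun h => h.trans hr, fun h => h.trans hr.symm⟩)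

open scoped Classical in
lemma IsConsistentDecomp.card_reachable_ne_le_two (hF : IsConsistentDecomp P M F)
    (hA : A ∈ P.parts) (hnd : ((F A).map (graphOf M).edgeComponent).Nodup)
    (Z : (graphOf M).ConnectedComponent) (u : (graphOf M).ConnectedComponent ⊕ P.parts) :
    #{l | ((componentBlockGraph P M F).deleteEdges {s(.inr ⟨A, hA⟩, .inl Z)}).Reachable u
        (.inr (blockOf P l)) ≠
      ((componentBlockGraph P M F).deleteEdges {s(.inr ⟨A, hA⟩, .inl Z)}).Reachable u
        (.inr (blockOf P (l + 1)))} ≤ 2 := by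
  refine (card_le_card_of_injOn (· + 1) (fun l hl => ?_) (add_left_injective 1).injOn).trans
    (hF.card_closedBlock_inter_component_le_two hA hnd Z)
  obtain ⟨hZ, hl⟩ := hF.eq_and_mem_closedBlock_of_reachable_ne hA (mem_filter.1 hl).2
  simp [hZ, hl]

end ComponentBlockGraph

/-- **Lemma (crossing partitions admit no maximal consistent graph).**
If `π` is a crossing partition of `{1,…,k}`, then there is no `π`-consistent multigraph with
exactly `k - #π + 1` connected components, i.e. `I*(π) = ∅`. -/
theorem crossing_no_maximal_consistent_graph (k : ℕ) [NeZero k]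
    (P : Finpartition (Finset.univ : Finset (Fin k)))
    (hP : IsCrossing P) :
    ¬ ∃ M : Multiset (Sym2 (Fin k)),
        Consistent P M ∧ numComponents M = k - P.parts.card + 1 := by
  classical
  rintro ⟨M, ⟨F, hF⟩, hc⟩
  obtain ⟨a, b, c, d, hab, hbc, hcd, ⟨A, hA, haA, hcA⟩, ⟨B, hB, hbB, hdB⟩, hnab⟩ := hP
  obtain ⟨hT, hnodup⟩ := hF.componentBlockGraph_isTree hc
  have hAB : (Sum.inr ⟨A, hA⟩ : (graphOf M).ConnectedComponent ⊕ P.parts) ≠ .inr ⟨B, hB⟩ :=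
    fun h => hnab ⟨A, hA, haA, Subtype.mk.inj (Sum.inr_injective h) ▸ hbB⟩
  obtain ⟨w, hAw, hsep⟩ :=
    hT.isAcyclic.exists_adj_not_reachable_deleteEdges (hT.connected.preconnected _ _) hAB
  obtain ⟨Z, rfl⟩ : ∃ Z, w = .inl Z := by
    rcases w with Z | C
    exacts [⟨Z, rfl⟩, (not_bipartiteOfRel_adj_inr_inr hAw).elim]
  set χ : Fin k → Prop := fun l => ((componentBlockGraph P M F).deleteEdges
    {s(.inr ⟨A, hA⟩, .inl Z)}).Reachable (.inr ⟨A, hA⟩) (.inr (blockOf P l))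
  have hχ {x y} (hx : x ∈ A) (hy : y ∈ B) : χ x ≠ χ y := by
    simp only [χ, blockOf_eq hA hx, blockOf_eq hB hy]
    exact fun h => hsep (h ▸ .rfl)
  have hmany : 4 ≤ #{l | χ l ≠ χ (l + 1)} := by
    convert four_le_card_filter_ne_add_one χ hab hbc hcd (hχ haA hbB) (hχ hcA hbB).symm
      (hχ hcA hdB) (hχ haA hdB).symm
  have hfew : #{l | χ l ≠ χ (l + 1)} ≤ 2 :=
    hF.card_reachable_ne_le_two hA (hnodup A hA) Z _
  omega
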